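/- The function x ↦ x ψ'(x) = 2πx sin(2πx)/(1 - cos(2πx)) is monotonically decreasing on (0, 1/2] and tends to 2 as x → 0⁺; in particular ψ'(x) ≤ 2/x for all x ∈ (0, 1/2]. -/

import Mathlib

/-!
Substituting `u = 2πx`, the function is `g u = u sin u / (1 - cos u) = u cot (u / 2)`, whose
derivative simplifies to `(sin u - u) / (1 - cos u) ≤ 0`. Near `0`,
`g u = 2 cos (u / 2) / sinc (u / 2)` extends continuously with value `2`, and monotonicity then
bounds `g` by its limit `2`.
-/

open Real Set Filter Topology

namespace Real

lemma sin_div_one_sub_cos_eq_cot_half (u : ℝ) : sin u / (1 - cos u) = cot (u / 2) := by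
  have hsin : sin u = 2 * sin (u / 2) * cos (u / 2) := by
    rw [← sin_two_mul, mul_div_cancel₀ u two_ne_zero]
  have hcos : 1 - cos u = 2 * sin (u / 2) ^ 2 := by
    have h := cos_sq (u / 2)
    rw [mul_div_cancel₀ u two_ne_zero] at h
    linarith [sin_sq_add_cos_sq (u / 2)]
  rw [hsin, hcos, cot_eq_cos_div_sin]
  -- at zeros of `sin (u / 2)` both sides are `0` by the convention `x / 0 = 0`
  rcases eq_or_ne (sin (u / 2)) 0 with hs | hs
  · simp [hs]
  · field_simp

lemma hasDerivAt_mul_sin_div_one_sub_cos {u : ℝ} (hu : cos u ≠ 1) :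
    HasDerivAt (fun u => u * sin u / (1 - cos u)) ((sin u - u) / (1 - cos u)) u := by
  have hd : 1 - cos u ≠ 0 := sub_ne_zero.2 hu.symm
  refine (((hasDerivAt_id' u).fun_mul (hasDerivAt_sin u)).fun_div
    ((hasDerivAt_cos u).const_sub 1) hd).congr_deriv ?_
  field_simp
  linear_combination (-u) * sin_sq_add_cos_sq u

lemma antitoneOn_mul_sin_div_one_sub_cos :
    AntitoneOn (fun u => u * sin u / (1 - cos u)) (Ioo 0 (2 * π)) := by
  have hderiv : ∀ u ∈ Ioo 0 (2 * π),
      HasDerivAt (fun u => u * sin u / (1 - cos u)) ((sin u - u) / (1 - cos u)) u := by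
    intro u hu
    refine hasDerivAt_mul_sin_div_one_sub_cos fun h => hu.1.ne' ?_
    exact (cos_eq_one_iff_of_lt_of_lt (by linarith [hu.1, pi_pos]) hu.2).1 h
  refine antitoneOn_of_hasDerivWithinAt_nonpos (f' := fun u => (sin u - u) / (1 - cos u))
    (convex_Ioo _ _)
    (fun u hu => (hderiv u hu).continuousAt.continuousWithinAt) ?_ ?_
  · rw [interior_Ioo]
    exact fun u hu => (hderiv u hu).hasDerivWithinAt
  · rw [interior_Ioo]
    exact fun u hu => div_nonpos_of_nonpos_of_nonneg (sub_nonpos.2 (sin_le hu.1.le))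
      (sub_nonneg.2 (cos_le_one u))

lemma tendsto_mul_sin_div_one_sub_cos :
    Tendsto (fun u => u * sin u / (1 - cos u)) (𝓝[≠] 0) (𝓝 2) := by
  have hcont : Tendsto (fun u => 2 * cos (u / 2) / sinc (u / 2)) (𝓝 0) (𝓝 2) := by
    have hcos : Continuous fun u : ℝ => 2 * cos (u / 2) := by fun_prop
    have hsinc : Continuous fun u : ℝ => sinc (u / 2) := continuous_sinc.comp (by fun_prop)
    convert (hcos.tendsto 0).div (hsinc.tendsto 0) (by simp) using 2 <;> simp
  refine (hcont.mono_left nhdsWithin_le_nhds).congr' ?_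
  filter_upwards [self_mem_nhdsWithin] with u hu
  have hu2 : u / 2 ≠ 0 := div_ne_zero hu two_ne_zero
  rw [mul_div_assoc u, sin_div_one_sub_cos_eq_cot_half, cot_eq_cos_div_sin, sinc_of_ne_zero hu2,
    div_div_eq_mul_div]
  ring

lemma mul_sin_div_one_sub_cos_le_two {u : ℝ} (hu : u ∈ Ioo 0 (2 * π)) :
    u * sin u / (1 - cos u) ≤ 2 := by
  refine ge_of_tendsto (tendsto_mul_sin_div_one_sub_cos.mono_left (nhdsGT_le_nhdsNE 0)) ?_
  filter_upwards [Ioc_mem_nhdsGT hu.1] with v hv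
  exact antitoneOn_mul_sin_div_one_sub_cos ⟨hv.1, hv.2.trans_lt hu.2⟩ hu hv.2

end Real

theorem x_mul_psi_deriv_monotone :
    AntitoneOn (fun x : ℝ => 2 * Real.pi * x * Real.sin (2 * Real.pi * x) /
      (1 - Real.cos (2 * Real.pi * x))) (Set.Ioc (0:ℝ) (1/2)) ∧
    Filter.Tendsto (fun x : ℝ => 2 * Real.pi * x * Real.sin (2 * Real.pi * x) /
      (1 - Real.cos (2 * Real.pi * x))) (nhdsWithin 0 (Set.Ioi 0)) (nhds 2) ∧
    ∀ x ∈ Set.Ioc (0:ℝ) (1/2),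
      2 * Real.pi * Real.sin (2 * Real.pi * x) / (1 - Real.cos (2 * Real.pi * x)) ≤ 2 / x := by
  have hmaps : MapsTo (fun x => 2 * π * x) (Ioc 0 (1 / 2)) (Ioo 0 (2 * π)) := fun x hx =>
    ⟨mul_pos two_pi_pos hx.1, by nlinarith [hx.2, pi_pos]⟩
  have hlim : Tendsto (fun x => 2 * π * x) (𝓝[>] 0) (𝓝[≠] 0) :=
    tendsto_nhdsWithin_of_tendsto_nhds_of_eventually_within _
      ((continuous_const.mul continuous_id).tendsto' 0 0 (by simp) |>.mono_left nhdsWithin_le_nhds)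
      (eventually_nhdsWithin_of_forall fun x (hx : 0 < x) => (mul_pos two_pi_pos hx).ne')
  refine ⟨fun x hx y hy hxy => antitoneOn_mul_sin_div_one_sub_cos (hmaps hx) (hmaps hy)
      (mul_le_mul_of_nonneg_left hxy two_pi_pos.le),
    tendsto_mul_sin_div_one_sub_cos.comp hlim, fun x hx => ?_⟩
  rw [le_div_iff₀ hx.1]
  exact (by ring : _ = _).trans_le (mul_sin_div_one_sub_cos_le_two (hmaps hx))
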